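/- Let μ be a Haar measure on the locally compact additive group ℚ_p normalized so that μ(ℤ_p) = 1. Then the integral over all of ℚ_p of the function σ ↦ 1/|1 + α·σ²|_p equals 2 if α ∈ {p, p/u}, and equals 1 + 1/p if α = -v. -/

import Mathlib

/-!
Since `‖·‖` takes values in `p ^ ℤ`, the integrand depends on `‖σ‖` alone as soon as `1 + α σ²`
never cancels, i.e. `‖1 + α σ²‖ = max 1 ‖α σ²‖`. For `‖α‖ = p⁻¹` this is automatic (`‖α σ²‖` is
an odd power of `p`); for `α = -v` the only critical case is `‖σ‖ = 1`, where `1 - v σ² ≡ 0 (mod p)`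
would make `v` a square mod `p`, which the choice of `v` excludes (for `p ≡ 1 (mod 4)` by Hensel's
lemma applied to `u`). The integrand is then `1` on `ℤ_p` and `1 / (‖α‖ p ^ (2n + 2))` on the
sphere of radius `p ^ (n + 1)`, whose measure is `p ^ (n + 1) - p ^ n` because a ball of radius
`p ^ (n + 1)` is the disjoint union of `p` translates of the ball of radius `p ^ n`. Summing the
geometric series gives `1 + 1 / (p ‖α‖)`.
-/

open MeasureTheory

/-- The Borel σ-algebra on `ℚ_p`. -/
noncomputable instance Qp.measurableSpace (p : ℕ) [Fact p.Prime] :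
    MeasurableSpace ℚ_[p] := borel _

instance Qp.borelSpace (p : ℕ) [Fact p.Prime] : BorelSpace ℚ_[p] := ⟨rfl⟩

open Metric Set
open scoped ENNReal

namespace PadicInt

variable {p : ℕ} [Fact p.Prime]

lemma norm_eq_one_of_toZMod_ne_zero {z : ℤ_[p]} (h : toZMod z ≠ 0) : ‖z‖ = 1 :=
  isUnit_iff.1 (IsUnit.of_map toZMod z h.isUnit)

lemma norm_lt_one_of_toZMod_eq_zero {z : ℤ_[p]} (h : toZMod z = 0) : ‖z‖ < 1 :=
  not_isUnit_iff.1 fun hz => (hz.map toZMod).ne_zero h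

lemma norm_eq_one_of_not_isSquare_toZMod {z : ℤ_[p]} (h : ¬ IsSquare (toZMod z)) : ‖z‖ = 1 :=
  norm_eq_one_of_toZMod_ne_zero fun h0 => h ⟨0, by simp [h0]⟩

open Polynomial in
lemma isSquare_of_isSquare_toZMod (hp : p ≠ 2) {z : ℤ_[p]} (hz : toZMod z ≠ 0)
    (h : IsSquare (toZMod z)) : IsSquare z := by
  obtain ⟨w, hw⟩ := h
  set a : ℤ_[p] := ((w.val : ℕ) : ℤ_[p])
  have ha : toZMod a = w := by simp [a]
  have hw0 : w ≠ 0 := by rintro rfl; simp_all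
  have h2 : (2 : ZMod p) ≠ 0 := Ring.two_ne_zero (by rwa [ZMod.ringChar_zmod_n])
  have hderiv : ‖(X ^ 2 - C z).derivative.aeval a‖ = 1 := by
    refine norm_eq_one_of_toZMod_ne_zero ?_
    simp [ha, hw0, one_add_one_eq_two, map_ofNat, h2]
  have hval : ‖(X ^ 2 - C z).aeval a‖ < 1 := by
    refine norm_lt_one_of_toZMod_eq_zero ?_
    simp [ha, hw, sq]
  obtain ⟨y, hy, -⟩ := hensels_lemma (F := X ^ 2 - C z) (a := a)
    (by rwa [hderiv, one_pow])
  exact ⟨y, (by simpa [sub_eq_zero, sq] using hy : y * y = z).symm⟩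

lemma norm_one_sub_mul_sq {v : ℤ_[p]} (hv : ¬ IsSquare (toZMod v)) (σ : ℤ_[p]) :
    ‖1 - v * σ ^ 2‖ = 1 := by
  refine norm_eq_one_of_toZMod_ne_zero fun h => hv ?_
  rw [map_sub, map_one, map_mul, map_pow, sub_eq_zero] at h
  have hσ : toZMod σ ≠ 0 := by rintro hσ; simp [hσ] at h
  exact ⟨(toZMod σ)⁻¹, by field_simp; linear_combination -h⟩

lemma not_isSquare_toZMod_of_mod_four (hp : p ≠ 2) {u v : ℤ_[p]}
    (hu : ¬ IsSquare (toZMod u)) (hv3 : p % 4 = 3 → v = -1) (hv1 : p % 4 = 1 → v = -u) :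
    ¬ IsSquare (toZMod v) := by
  have hodd : p % 2 = 1 := Nat.odd_iff.1 ((Fact.out : p.Prime).odd_of_ne_two hp)
  rcases (by omega : p % 4 = 1 ∨ p % 4 = 3) with h1 | h3
  · rw [hv1 h1, map_neg]
    exact fun hv => hu (by simpa using (ZMod.exists_sq_eq_neg_one_iff.2 (by omega)).mul hv)
  · rw [hv3 h3, map_neg, map_one, ZMod.exists_sq_eq_neg_one_iff]
    omega

end PadicInt

namespace Padic

variable {p : ℕ} [Fact p.Prime]

lemma one_lt_prime : (1 : ℝ) < p := Nat.one_lt_cast.2 (Fact.out : p.Prime).one_lt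

lemma exists_natCast_norm_sub_lt_one {y : ℚ_[p]} (hy : ‖y‖ ≤ 1) : ∃ j < p, ‖y - j‖ < 1 := by
  set z : ℤ_[p] := ⟨y, hy⟩
  obtain ⟨j, hj, hmem⟩ := PadicInt.exists_mem_range z
  refine ⟨j, hj, ?_⟩
  rw [IsLocalRing.mem_maximalIdeal, mem_nonunits_iff, PadicInt.not_isUnit_iff] at hmem
  rwa [PadicInt.norm_def, PadicInt.coe_sub, PadicInt.coe_natCast] at hmem

lemma eq_of_norm_natCast_sub_lt_one {i j : ℕ} (hi : i < p) (hj : j < p)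
    (h : ‖(i - j : ℚ_[p])‖ < 1) : i = j := by
  have hdvd : (p : ℤ) ∣ (i : ℤ) - j := norm_intCast_lt_one_iff.1 (by push_cast; exact h)
  exact ((Nat.modEq_iff_dvd.2 hdvd).eq_of_lt_of_lt hj hi).symm

lemma measure_closedBall_eq_mul_measure_ball (μ : Measure ℚ_[p]) [μ.IsAddLeftInvariant]
    {c : ℚ_[p]} (hc : c ≠ 0) : μ (closedBall 0 ‖c‖) = p * μ (ball 0 ‖c‖) := by
  have hc' : 0 < ‖c‖ := norm_pos_iff.2 hc
  have hcover : closedBall (0 : ℚ_[p]) ‖c‖ = ⋃ j : Fin p, ball ((j : ℕ) * c) ‖c‖ := by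
    ext x
    simp only [mem_closedBall_zero_iff, mem_iUnion, mem_ball, dist_eq_norm]
    constructor
    · intro hx
      obtain ⟨j, hj, hxj⟩ := exists_natCast_norm_sub_lt_one (y := x / c)
        (by rw [norm_div]; exact div_le_one_of_le₀ hx hc'.le)
      refine ⟨⟨j, hj⟩, ?_⟩
      rwa [← mul_lt_mul_iff_left₀ hc', one_mul, ← norm_mul, sub_mul, div_mul_cancel₀ _ hc] at hxj
    · rintro ⟨j, hj⟩
      calc ‖x‖ = ‖(x - j * c) + j * c‖ := by rw [sub_add_cancel]
        _ ≤ max ‖x - j * c‖ ‖(j : ℚ_[p]) * c‖ := IsUltrametricDist.norm_add_le_max _ _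
        _ ≤ ‖c‖ := max_le hj.le (by
            rw [norm_mul]
            exact mul_le_of_le_one_left hc'.le (IsUltrametricDist.norm_natCast_le_one ℚ_[p] j))
  have hdisj : Pairwise (Function.onFun Disjoint fun j : Fin p => ball ((j : ℕ) * c) ‖c‖) := by
    intro i j hij
    refine disjoint_left.2 fun x hxi hxj => hij (Fin.ext ?_)
    rw [mem_ball] at hxi hxj
    refine eq_of_norm_natCast_sub_lt_one i.2 j.2 ?_
    rw [← mul_lt_mul_iff_left₀ hc', one_mul, ← norm_mul, sub_mul, ← dist_eq_norm]
    calc dist ((i : ℕ) * c) ((j : ℕ) * c) ≤ max (dist ((i : ℕ) * c) x) (dist x ((j : ℕ) * c)) :=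
          IsUltrametricDist.dist_triangle_max _ _ _
      _ < ‖c‖ := max_lt (by rwa [dist_comm]) hxj
  have hball (x : ℚ_[p]) : μ (ball x ‖c‖) = μ (ball 0 ‖c‖) := by
    rw [← measure_preimage_add μ x, preimage_add_ball, sub_self]
  rw [hcover, measure_iUnion hdisj fun _ => measurableSet_ball, tsum_fintype]
  simp [hball]

lemma ball_pow_succ (n : ℕ) : ball (0 : ℚ_[p]) (p ^ (n + 1)) = closedBall 0 (p ^ n) := by
  ext x
  rw [mem_ball_zero_iff, mem_closedBall_zero_iff, ← zpow_natCast, ← zpow_natCast,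
    norm_le_pow_iff_norm_lt_pow_add_one]
  push_cast
  rfl

lemma measure_closedBall_pow (μ : Measure ℚ_[p]) [μ.IsAddLeftInvariant]
    (hμ : μ (closedBall 0 1) = 1) (n : ℕ) : μ (closedBall 0 (p ^ n)) = p ^ n := by
  induction n with
  | zero => simpa using hμ
  | succ n ih =>
    have hc : ‖((p : ℚ_[p]) ^ (n + 1))⁻¹‖ = (p : ℝ) ^ (n + 1) := by
      rw [norm_inv, norm_pow, norm_p, inv_pow, inv_inv]
    have hc0 : ((p : ℚ_[p]) ^ (n + 1))⁻¹ ≠ 0 := by simp [(Fact.out : p.Prime).ne_zero]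
    rw [← hc, measure_closedBall_eq_mul_measure_ball μ hc0, hc, ball_pow_succ, ih, pow_succ']

lemma sphere_pow_succ (n : ℕ) :
    sphere (0 : ℚ_[p]) (p ^ (n + 1)) = closedBall 0 (p ^ (n + 1)) \ closedBall 0 (p ^ n) := by
  rw [← ball_pow_succ n, closedBall_sdiff_ball]

lemma measure_sphere_pow_succ (μ : Measure ℚ_[p]) [μ.IsAddLeftInvariant]
    (hμ : μ (closedBall 0 1) = 1) (n : ℕ) :
    μ (sphere 0 (p ^ (n + 1))) = ENNReal.ofReal (p ^ (n + 1) - p ^ n) := by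
  have hp : (0 : ℝ) ≤ p := Nat.cast_nonneg p
  rw [sphere_pow_succ, measure_sdiff (closedBall_subset_closedBall ?_)
    measurableSet_closedBall.nullMeasurableSet (by simp [measure_closedBall_pow μ hμ]),
    measure_closedBall_pow μ hμ, measure_closedBall_pow μ hμ, ENNReal.ofReal_sub _ (by positivity),
    ENNReal.ofReal_pow hp, ENNReal.ofReal_pow hp, ENNReal.ofReal_natCast]
  exact pow_le_pow_right₀ one_lt_prime.le n.le_succ

lemma iUnion_sphere_pow_succ :
    ⋃ n : ℕ, sphere (0 : ℚ_[p]) (p ^ (n + 1)) = (closedBall 0 1)ᶜ := by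
  have hp : (1 : ℝ) < p := one_lt_prime
  ext x
  simp only [mem_iUnion, mem_sphere_zero_iff_norm, mem_compl_iff, mem_closedBall_zero_iff, not_le]
  constructor
  · rintro ⟨n, hn⟩
    rw [hn]
    exact one_lt_pow₀ hp n.succ_ne_zero
  · intro hx
    have hx0 : x ≠ 0 := by rintro rfl; norm_num at hx
    rw [norm_eq_zpow_neg_valuation hx0] at hx ⊢
    have hval : 0 < -x.valuation := (one_lt_zpow_iff_right₀ hp).1 hx
    refine ⟨(-x.valuation - 1).toNat, ?_⟩
    rw [← zpow_natCast]
    congr 1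
    omega

lemma pairwise_disjoint_sphere_pow_succ :
    Pairwise (Function.onFun Disjoint fun n : ℕ => sphere (0 : ℚ_[p]) (p ^ (n + 1))) := by
  intro m n hmn
  refine disjoint_left.2 fun x hm hn => hmn ?_
  rw [mem_sphere_zero_iff_norm] at hm hn
  have hp : (1 : ℝ) < p := one_lt_prime
  exact Nat.succ_injective (pow_right_injective₀ (by positivity) hp.ne' (hm.symm.trans hn))

lemma lintegral_eq_lintegral_closedBall_add_tsum_sphere (μ : Measure ℚ_[p])
    (f : ℚ_[p] → ℝ≥0∞) :
    ∫⁻ x, f x ∂μ =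
      ∫⁻ x in closedBall 0 1, f x ∂μ + ∑' n : ℕ, ∫⁻ x in sphere 0 (p ^ (n + 1)), f x ∂μ := by
  rw [← lintegral_add_compl f measurableSet_closedBall, ← iUnion_sphere_pow_succ,
    lintegral_iUnion (fun _ => isClosed_sphere.measurableSet) pairwise_disjoint_sphere_pow_succ]

theorem integral_one_div_max_one_mul_norm_sq (μ : Measure ℚ_[p]) [μ.IsAddLeftInvariant]
    (hμ : μ (closedBall 0 1) = 1) {a : ℝ} (ha₁ : a ≤ 1) (ha₂ : 1 ≤ a * p ^ 2) :
    ∫ σ, 1 / max 1 (a * ‖σ‖ ^ 2) ∂μ = 1 + 1 / (p * a) := by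
  have hp : (1 : ℝ) < p := one_lt_prime
  have ha : 0 < a := pos_of_mul_pos_left (one_pos.trans_le ha₂) (by positivity)
  have hball (σ : ℚ_[p]) (hσ : σ ∈ closedBall 0 1) :
      ENNReal.ofReal (1 / max 1 (a * ‖σ‖ ^ 2)) = 1 := by
    rw [mem_closedBall_zero_iff] at hσ
    rw [max_eq_left, div_one, ENNReal.ofReal_one]
    nlinarith [norm_nonneg σ]
  have hsphere (n : ℕ) (σ : ℚ_[p]) (hσ : σ ∈ sphere 0 (p ^ (n + 1))) :
      ENNReal.ofReal (1 / max 1 (a * ‖σ‖ ^ 2)) = ENNReal.ofReal (1 / (a * p ^ (2 * n + 2))) := by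
    rw [mem_sphere_zero_iff_norm] at hσ
    have : 1 ≤ a * ‖σ‖ ^ 2 := by
      rw [hσ]
      calc 1 ≤ a * p ^ 2 := ha₂
        _ ≤ a * ((p : ℝ) ^ (n + 1)) ^ 2 := by gcongr; exact le_self_pow₀ hp.le n.succ_ne_zero
    rw [max_eq_right this, hσ, ← pow_mul]
    ring_nf
  have hterm (n : ℕ) :
      ENNReal.ofReal (1 / (a * p ^ (2 * n + 2))) * ENNReal.ofReal (p ^ (n + 1) - p ^ n) =
        ENNReal.ofReal ((1 - (p : ℝ)⁻¹) / (p * a) * (p : ℝ)⁻¹ ^ n) := by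
    rw [← ENNReal.ofReal_mul (by positivity), inv_pow]
    congr 1
    field_simp
    ring
  have hr : (p : ℝ)⁻¹ < 1 := inv_lt_one_of_one_lt₀ hp
  have hsum : HasSum (fun n : ℕ => (1 - (p : ℝ)⁻¹) / (p * a) * (p : ℝ)⁻¹ ^ n) (1 / (p * a)) := by
    have := (hasSum_geometric_of_lt_one (by positivity) hr).mul_left ((1 - (p : ℝ)⁻¹) / (p * a))
    rwa [div_mul_eq_mul_div, mul_inv_cancel₀ (sub_pos.2 hr).ne'] at this
  have hterm₀ (n : ℕ) : 0 ≤ (1 - (p : ℝ)⁻¹) / (p * a) * (p : ℝ)⁻¹ ^ n := by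
    have := sub_pos.2 hr
    positivity
  have hcont : Continuous fun σ : ℚ_[p] => 1 / max 1 (a * ‖σ‖ ^ 2) :=
    continuous_const.div (by fun_prop) fun σ => (one_pos.trans_le (le_max_left _ _)).ne'
  rw [integral_eq_lintegral_of_nonneg_ae (ae_of_all _ fun σ => by positivity)
      hcont.aestronglyMeasurable, lintegral_eq_lintegral_closedBall_add_tsum_sphere,
    setLIntegral_congr_fun measurableSet_closedBall hball,
    tsum_congr fun n => setLIntegral_congr_fun isClosed_sphere.measurableSet (hsphere n)]
  simp only [setLIntegral_const, hμ, one_mul, measure_sphere_pow_succ μ hμ]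
  rw [tsum_congr hterm, ← ENNReal.ofReal_tsum_of_nonneg hterm₀ hsum.summable, hsum.tsum_eq,
    ← ENNReal.ofReal_one, ← ENNReal.ofReal_add zero_le_one (by positivity),
    ENNReal.toReal_ofReal (by positivity)]

theorem integral_one_div_norm_one_add_mul_sq (μ : Measure ℚ_[p]) [μ.IsAddLeftInvariant]
    (hμ : μ (closedBall 0 1) = 1) {α : ℚ_[p]} (hα₁ : ‖α‖ ≤ 1) (hα₂ : 1 ≤ ‖α‖ * p ^ 2)
    (hα : ∀ σ : ℚ_[p], ‖1 + α * σ ^ 2‖ = max 1 ‖α * σ ^ 2‖) :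
    ∫ σ, 1 / ‖1 + α * σ ^ 2‖ ∂μ = 1 + 1 / (p * ‖α‖) := by
  simp_rw [hα, norm_mul, norm_pow]
  exact integral_one_div_max_one_mul_norm_sq μ hμ hα₁ hα₂

lemma norm_one_add_of_norm_ne_one (x : ℚ_[p]) (hx : ‖x‖ ≠ 1) : ‖1 + x‖ = max 1 ‖x‖ := by
  rw [IsUltrametricDist.norm_add_eq_max_of_norm_ne_norm (by rwa [norm_one, ne_comm]), norm_one]

lemma norm_mul_sq_ne_one {α : ℚ_[p]} (hα : ‖α‖ = (p : ℝ)⁻¹) (σ : ℚ_[p]) : ‖α * σ ^ 2‖ ≠ 1 := by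
  have hp : (1 : ℝ) < p := one_lt_prime
  rcases eq_or_ne σ 0 with rfl | hσ
  · simp
  rw [norm_mul, norm_pow, hα, norm_eq_zpow_neg_valuation hσ, ← zpow_neg_one, ← zpow_natCast,
    ← zpow_mul, ← zpow_add₀ (by positivity), Ne, zpow_eq_one_iff_right₀ (by positivity) hp.ne']
  omega

lemma norm_one_add_neg_mul_sq_eq_max {v : ℤ_[p]} (hv : ¬ IsSquare (PadicInt.toZMod v))
    (σ : ℚ_[p]) :
    ‖1 + -(v : ℚ_[p]) * σ ^ 2‖ = max 1 ‖-(v : ℚ_[p]) * σ ^ 2‖ := by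
  have hv₁ : ‖(v : ℚ_[p])‖ = 1 := PadicInt.norm_eq_one_of_not_isSquare_toZMod hv
  rcases ne_or_eq ‖σ‖ 1 with hσ | hσ
  · refine norm_one_add_of_norm_ne_one _ ?_
    rwa [norm_mul, norm_neg, hv₁, one_mul, norm_pow, Ne,
      pow_eq_one_iff_of_nonneg (norm_nonneg σ) two_ne_zero]
  · set s : ℤ_[p] := ⟨σ, hσ.le⟩
    have h := PadicInt.norm_one_sub_mul_sq hv s
    rw [PadicInt.norm_def, PadicInt.coe_sub, PadicInt.coe_one, PadicInt.coe_mul,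
      PadicInt.coe_pow] at h
    rw [norm_mul, norm_neg, hv₁, norm_pow, hσ, one_pow, mul_one, max_self, neg_mul,
      ← sub_eq_add_neg]
    exact h

end Padic

theorem stmt19 (p : ℕ) [Fact p.Prime] (hp2 : 2 < p)
    (u : ℤ_[p]) (hu : ‖u‖ = 1) (husq : ¬ ∃ y : ℚ_[p], y ^ 2 = (u : ℚ_[p]))
    (v : ℤ_[p]) (hv3 : p % 4 = 3 → v = -1) (hv1 : p % 4 = 1 → v = -u)
    (μ : Measure ℚ_[p]) (hμ : μ.IsAddHaarMeasure)
    (hnorm : μ {x : ℚ_[p] | ‖x‖ ≤ 1} = 1) :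
    (∀ α : ℚ_[p],
      α ∈ ({(p : ℚ_[p]), (p : ℚ_[p]) / (u : ℚ_[p])} : Set ℚ_[p]) →
      ∫ σ, 1 / ‖1 + α * σ ^ 2‖ ∂μ = 2) ∧
    ∫ σ, 1 / ‖1 + (-(v : ℚ_[p])) * σ ^ 2‖ ∂μ = 1 + 1 / (p : ℝ) := by
  have hp : (1 : ℝ) < p := Padic.one_lt_prime
  have hball : μ (closedBall 0 1) = 1 := by simpa [closedBall] using hnorm
  refine ⟨fun α hα => ?_, ?_⟩
  · have hαn : ‖α‖ = (p : ℝ)⁻¹ := by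
      rcases hα with rfl | rfl
      · exact Padic.norm_p
      · rw [norm_div, Padic.norm_p, ← PadicInt.norm_def, hu, div_one]
    rw [Padic.integral_one_div_norm_one_add_mul_sq μ hball
      (hαn ▸ inv_le_one_of_one_le₀ hp.le)
      (by rw [hαn, sq, inv_mul_cancel_left₀ (by positivity)]; exact hp.le)
      fun σ => Padic.norm_one_add_of_norm_ne_one _ (Padic.norm_mul_sq_ne_one hαn σ), hαn]
    field_simp
    norm_num
  · have hu' : ¬ IsSquare (PadicInt.toZMod u) := fun h => husq <| by
      obtain ⟨y, hy⟩ := PadicInt.isSquare_of_isSquare_toZMod (by omega)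
        (fun h0 => (PadicInt.norm_lt_one_of_toZMod_eq_zero h0).ne hu) h
      exact ⟨y, by rw [hy]; push_cast; ring⟩
    have hv := PadicInt.not_isSquare_toZMod_of_mod_four (by omega) hu' hv3 hv1
    have hvn : ‖-(v : ℚ_[p])‖ = 1 := by
      rw [norm_neg, ← PadicInt.norm_def, PadicInt.norm_eq_one_of_not_isSquare_toZMod hv]
    rw [Padic.integral_one_div_norm_one_add_mul_sq μ hball hvn.le
      (by rw [hvn, one_mul]; exact one_le_pow₀ hp.le) (Padic.norm_one_add_neg_mul_sq_eq_max hv),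
      hvn, mul_one]
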